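/- Let P, Q ∈ ℚ⟦q⟧ be the formal power series with constant term 1 whose coefficient of q^k for k ≥ 1 is −24·σ₁(k) for P and 240·σ₃(k) for Q. Then Q − P² is the formal power series whose constant term is 0 and whose coefficient of q^d for d ≥ 1 is 288·d·σ₁(d). -/

import Mathlib

open PowerSeries

/-- σ_k(d): the sum of the k-th powers of the positive divisors of d. -/
def sigma (k d : ℕ) : ℕ := ∑ e ∈ d.divisors, e ^ k

/-- The Eisenstein series `P = E₂`: constant term 1, coefficient of `q^k` equal to
`-24 σ₁(k)` for `k ≥ 1`. -/
noncomputable def Pseries : PowerSeries ℚ :=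
  PowerSeries.mk fun k => if k = 0 then 1 else -24 * (sigma 1 k : ℚ)

/-- The Eisenstein series `Q = E₄`: constant term 1, coefficient of `q^k` equal to
`240 σ₃(k)` for `k ≥ 1`. -/
noncomputable def Qseries : PowerSeries ℚ :=
  PowerSeries.mk fun k => if k = 0 then 1 else 240 * (sigma 3 k : ℚ)

/-!
Comparing coefficients, the theorem is Besge's identity
`12 ∑_{i + j = n} σ₁(i) σ₁(j) = 5 σ₃(n) + σ₁(n) - 6 n σ₁(n)`, whose left side is `12 ∑ a b` over
the positive solutions of `a x + b y = n`. Write `4 a b = (a + b)² - (a - b)²`. Liouville's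
bijection `(a, b, x, y) ↦ (a - b, b, x, x + y)`, from the solutions with `a > b` onto those with
`x < y`, together with the symmetry `(a, b, x, y) ↦ (b, a, y, x)`, reduces both sums of squares
to sums over the diagonals `a = b` and `x = y`, and these are divisor sums.
-/

open Finset

lemma sum_trichotomy {ι β M : Type*} [LinearOrder β] [AddCommMonoid M] (s : Finset ι)
    (u v : ι → β) (f : ι → M) :
    ∑ i ∈ s, f i = ∑ i ∈ s with u i < v i, f i + ∑ i ∈ s with v i < u i, f i +
      ∑ i ∈ s with u i = v i, f i := by
  simp only [sum_filter, ← sum_add_distrib]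
  refine sum_congr rfl fun i _ => ?_
  rcases lt_trichotomy (u i) (v i) with h | h | h
  · simp [h, h.not_gt, h.ne]
  · simp [h]
  · simp [h, h.not_gt, h.ne']

lemma cast_sigma (k n : ℕ) : (sigma k n : ℚ) = ∑ d ∈ n.divisors, (d : ℚ) ^ k := by
  simp [sigma]

lemma six_mul_sum_Ico_one_sq (m : ℕ) :
    6 * ∑ a ∈ Ico 1 m, (a : ℚ) ^ 2 = 2 * (m : ℚ) ^ 3 - 3 * (m : ℚ) ^ 2 + m := by
  induction m with
  | zero => simp
  | succ m ih =>
    rcases Nat.eq_zero_or_pos m with rfl | hm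
    · norm_num
    · rw [sum_Ico_succ_top hm, mul_add, ih]
      push_cast
      ring

/-- The positive solutions `((a, b), (x, y))` of `a * x + b * y = n`. -/
def quadruples (n : ℕ) : Finset ((ℕ × ℕ) × (ℕ × ℕ)) :=
  {p ∈ (Icc 1 n ×ˢ Icc 1 n) ×ˢ (Icc 1 n ×ˢ Icc 1 n) | p.1.1 * p.2.1 + p.1.2 * p.2.2 = n}

@[simp]
lemma mem_quadruples {n a b x y : ℕ} :
    ((a, b), (x, y)) ∈ quadruples n ↔
      0 < a ∧ 0 < b ∧ 0 < x ∧ 0 < y ∧ a * x + b * y = n := by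
  simp only [quadruples, mem_filter, mem_product, mem_Icc]
  constructor
  · rintro ⟨⟨⟨⟨ha, -⟩, hb, -⟩, ⟨hx, -⟩, hy, -⟩, h⟩
    exact ⟨ha, hb, hx, hy, h⟩
  · rintro ⟨ha, hb, hx, hy, h⟩
    refine ⟨⟨⟨⟨ha, ?_⟩, hb, ?_⟩, ⟨hx, ?_⟩, hy, ?_⟩, h⟩ <;> nlinarith

section Quadruples

variable {M : Type*} [AddCommMonoid M] (n : ℕ)

lemma sum_quadruples_filter_swap (P : (ℕ × ℕ) × (ℕ × ℕ) → Prop) [DecidablePred P]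
    (f : (ℕ × ℕ) × (ℕ × ℕ) → M) :
    ∑ p ∈ quadruples n with P p, f p =
      ∑ p ∈ quadruples n with P ((p.1.2, p.1.1), (p.2.2, p.2.1)),
        f ((p.1.2, p.1.1), (p.2.2, p.2.1)) := by
  refine sum_nbij' (fun p => ((p.1.2, p.1.1), (p.2.2, p.2.1)))
    (fun p => ((p.1.2, p.1.1), (p.2.2, p.2.1))) ?_ ?_ (fun _ _ => rfl) (fun _ _ => rfl)
    (fun _ _ => rfl) <;>
  · rintro ⟨⟨a, b⟩, x, y⟩
    simp only [mem_filter, mem_quadruples]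
    rintro ⟨⟨ha, hb, hx, hy, h⟩, hP⟩
    exact ⟨⟨hb, ha, hy, hx, by rw [← h, add_comm]⟩, hP⟩

lemma sum_quadruples_filter_fst_eq (f : (ℕ × ℕ) × (ℕ × ℕ) → M) :
    ∑ p ∈ quadruples n with p.1.1 = p.1.2, f p =
      ∑ p ∈ quadruples n with p.2.1 = p.2.2, f p.swap := by
  refine sum_nbij' Prod.swap Prod.swap ?_ ?_ (fun _ _ => rfl) (fun _ _ => rfl)
    (fun _ _ => rfl) <;>
  · rintro ⟨⟨a, b⟩, x, y⟩
    simp only [mem_filter, mem_quadruples, Prod.swap]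
    rintro ⟨⟨ha, hb, hx, hy, h⟩, hP⟩
    exact ⟨⟨hx, hy, ha, hb, by rw [← h, mul_comm x, mul_comm y]⟩, hP⟩

/-- Liouville's bijection `(a, b, x, y) ↦ (a - b, b, x, x + y)`. -/
lemma sum_quadruples_filter_fst_gt (f : (ℕ × ℕ) × (ℕ × ℕ) → M) :
    ∑ p ∈ quadruples n with p.1.2 < p.1.1, f p =
      ∑ p ∈ quadruples n with p.2.1 < p.2.2,
        f ((p.1.1 + p.1.2, p.1.2), (p.2.1, p.2.2 - p.2.1)) := by
  refine sum_nbij' (fun p => ((p.1.1 - p.1.2, p.1.2), (p.2.1, p.2.1 + p.2.2)))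
    (fun p => ((p.1.1 + p.1.2, p.1.2), (p.2.1, p.2.2 - p.2.1))) ?_ ?_ ?_ ?_ ?_
  all_goals
    rintro ⟨⟨a, b⟩, x, y⟩
    simp only [mem_filter, mem_quadruples, Prod.mk.injEq, and_true, true_and]
  · rintro ⟨⟨ha, hb, hx, hy, h⟩, hba⟩
    refine ⟨⟨by omega, hb, hx, by omega, ?_⟩, by omega⟩
    have := Nat.mul_le_mul_right x hba.le
    rw [← h, Nat.sub_mul, Nat.mul_add]
    omega
  · rintro ⟨⟨ha, hb, hx, hy, h⟩, hxy⟩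
    refine ⟨⟨by omega, hb, hx, by omega, ?_⟩, by omega⟩
    have := Nat.mul_le_mul_left b hxy.le
    rw [← h, Nat.add_mul, Nat.mul_sub]
    omega
  · omega
  · omega
  · rintro ⟨-, hba⟩
    congr <;> omega

lemma sum_quadruples_filter_snd_eq (f : (ℕ × ℕ) × (ℕ × ℕ) → M) :
    ∑ p ∈ quadruples n with p.2.1 = p.2.2, f p =
      ∑ m ∈ n.divisors, ∑ a ∈ Ico 1 m, f ((a, m - a), (n / m, n / m)) := by
  rw [sum_sigma']
  have hinv : ∀ p ∈ {p ∈ quadruples n | p.2.1 = p.2.2},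
      ((p.1.1, p.1.1 + p.1.2 - p.1.1), (n / (p.1.1 + p.1.2), n / (p.1.1 + p.1.2))) = p := by
    rintro ⟨⟨a, b⟩, x, y⟩
    simp only [mem_filter, mem_quadruples, Prod.mk.injEq]
    rintro ⟨⟨ha, hb, hx, hy, h⟩, rfl⟩
    rw [← h, ← Nat.add_mul, Nat.mul_div_cancel_left x (by omega)]
    simp
  refine sum_nbij' (fun p => ⟨p.1.1 + p.1.2, p.1.1⟩)
    (fun t => ((t.2, t.1 - t.2), (n / t.1, n / t.1))) ?_ ?_ hinv ?_ (fun p hp => by rw [hinv p hp])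
  · rintro ⟨⟨a, b⟩, x, y⟩
    simp only [mem_filter, mem_quadruples, mem_sigma, Nat.mem_divisors, mem_Ico]
    rintro ⟨⟨ha, hb, hx, hy, h⟩, rfl⟩
    exact ⟨⟨⟨x, by rw [← h, Nat.add_mul]⟩, by rw [← h]; positivity⟩, ha, by omega⟩
  · rintro ⟨m, a⟩
    simp only [mem_filter, mem_quadruples, mem_sigma, Nat.mem_divisors, mem_Ico, and_true]
    rintro ⟨⟨⟨k, rfl⟩, hn⟩, ha, ham⟩
    have hk : 0 < k := Nat.pos_of_ne_zero (right_ne_zero_of_mul hn)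
    rw [Nat.mul_div_cancel_left k (by omega), ← Nat.add_mul, Nat.add_sub_cancel' ham.le]
    exact ⟨ha, by omega, hk, hk, rfl⟩
  · rintro ⟨m, a⟩
    simp only [mem_sigma, mem_Ico, Sigma.mk.injEq, heq_eq_eq, and_true]
    omega

lemma sum_quadruples_sub_sq :
    ∑ p ∈ quadruples n, ((p.1.1 : ℚ) - p.1.2) ^ 2 =
      2 * ∑ p ∈ quadruples n with p.2.1 < p.2.2, (p.1.1 : ℚ) ^ 2 := by
  have hlt : ∑ p ∈ quadruples n with p.1.1 < p.1.2, ((p.1.1 : ℚ) - p.1.2) ^ 2 =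
      ∑ p ∈ quadruples n with p.1.2 < p.1.1, ((p.1.1 : ℚ) - p.1.2) ^ 2 := by
    rw [sum_quadruples_filter_swap]
    exact sum_congr rfl fun p _ => by ring
  have hgt : ∑ p ∈ quadruples n with p.1.2 < p.1.1, ((p.1.1 : ℚ) - p.1.2) ^ 2 =
      ∑ p ∈ quadruples n with p.2.1 < p.2.2, (p.1.1 : ℚ) ^ 2 := by
    rw [sum_quadruples_filter_fst_gt]
    exact sum_congr rfl fun p _ => by push_cast; ring
  have heq : ∑ p ∈ quadruples n with p.1.1 = p.1.2, ((p.1.1 : ℚ) - p.1.2) ^ 2 = 0 :=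
    sum_eq_zero fun p hp => by simp [(mem_filter.1 hp).2]
  rw [sum_trichotomy _ (fun p => p.1.1) (fun p => p.1.2), hlt, hgt, heq]
  ring

lemma sum_quadruples_add_sq :
    ∑ p ∈ quadruples n, ((p.1.1 : ℚ) + p.1.2) ^ 2 =
      2 * ∑ p ∈ quadruples n with p.1.2 < p.1.1, (p.1.1 : ℚ) ^ 2 +
        ∑ p ∈ quadruples n with p.2.1 = p.2.2, ((p.1.1 : ℚ) + p.1.2) ^ 2 := by
  have hgt : ∑ p ∈ quadruples n with p.2.2 < p.2.1, ((p.1.1 : ℚ) + p.1.2) ^ 2 =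
      ∑ p ∈ quadruples n with p.2.1 < p.2.2, ((p.1.1 : ℚ) + p.1.2) ^ 2 := by
    rw [sum_quadruples_filter_swap]
    exact sum_congr rfl fun p _ => by ring
  have hlt : ∑ p ∈ quadruples n with p.2.1 < p.2.2, ((p.1.1 : ℚ) + p.1.2) ^ 2 =
      ∑ p ∈ quadruples n with p.1.2 < p.1.1, (p.1.1 : ℚ) ^ 2 := by
    rw [sum_quadruples_filter_fst_gt]
    exact sum_congr rfl fun p _ => by push_cast; ring
  rw [sum_trichotomy _ (fun p => p.2.1) (fun p => p.2.2), hgt, hlt]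
  ring

lemma sum_quadruples_filter_snd_lt_sq_sub :
    ∑ p ∈ quadruples n with p.2.1 < p.2.2, (p.1.1 : ℚ) ^ 2 -
        ∑ p ∈ quadruples n with p.1.2 < p.1.1, (p.1.1 : ℚ) ^ 2 =
      ∑ p ∈ quadruples n with p.1.1 = p.1.2, (p.1.1 : ℚ) ^ 2 -
        ∑ p ∈ quadruples n with p.2.1 = p.2.2, (p.1.1 : ℚ) ^ 2 := by
  have hlt : ∑ p ∈ quadruples n with p.1.1 < p.1.2, (p.1.1 : ℚ) ^ 2 =
      ∑ p ∈ quadruples n with p.2.2 < p.2.1, (p.1.1 : ℚ) ^ 2 := by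
    rw [sum_quadruples_filter_swap, sum_quadruples_filter_fst_gt, sum_quadruples_filter_swap]
  have hab := sum_trichotomy (quadruples n) (fun p => p.1.1) (fun p => p.1.2)
    (fun p => (p.1.1 : ℚ) ^ 2)
  have hxy := sum_trichotomy (quadruples n) (fun p => p.2.1) (fun p => p.2.2)
    (fun p => (p.1.1 : ℚ) ^ 2)
  linarith

lemma six_mul_sum_quadruples_filter_snd_eq_sq :
    6 * ∑ p ∈ quadruples n with p.2.1 = p.2.2, (p.1.1 : ℚ) ^ 2 =
      2 * sigma 3 n - 3 * sigma 2 n + sigma 1 n := by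
  rw [sum_quadruples_filter_snd_eq, mul_sum]
  simp only [six_mul_sum_Ico_one_sq, sum_add_distrib, sum_sub_distrib, ← mul_sum, cast_sigma,
    pow_one]

lemma sum_quadruples_filter_snd_eq_add_sq :
    ∑ p ∈ quadruples n with p.2.1 = p.2.2, ((p.1.1 : ℚ) + p.1.2) ^ 2 =
      sigma 3 n - sigma 2 n := by
  rw [sum_quadruples_filter_snd_eq, cast_sigma, cast_sigma, ← sum_sub_distrib]
  refine sum_congr rfl fun m hm => ?_
  have hm : 1 ≤ m := Nat.pos_of_mem_divisors hm
  rw [sum_congr rfl fun a ha => by rw [Nat.cast_sub (mem_Ico.1 ha).2.le, add_sub_cancel],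
    sum_const, Nat.card_Ico, nsmul_eq_mul, Nat.cast_sub hm]
  ring

lemma sum_quadruples_filter_fst_eq_sq :
    ∑ p ∈ quadruples n with p.1.1 = p.1.2, (p.1.1 : ℚ) ^ 2 = n * sigma 1 n - sigma 2 n := by
  rw [sum_quadruples_filter_fst_eq, sum_quadruples_filter_snd_eq, cast_sigma, cast_sigma,
    ← Nat.sum_div_divisors n (fun d => (d : ℚ) ^ 1),
    ← Nat.sum_div_divisors n (fun d => (d : ℚ) ^ 2),
    mul_sum, ← sum_sub_distrib]
  refine sum_congr rfl fun m hm => ?_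
  have hmn : (m : ℚ) * (n / m : ℕ) = n :=
    mod_cast Nat.mul_div_cancel' (Nat.dvd_of_mem_divisors hm)
  have hm : 1 ≤ m := Nat.pos_of_mem_divisors hm
  simp only [Prod.swap, sum_const, Nat.card_Ico, nsmul_eq_mul, Nat.cast_sub hm]
  linear_combination ((n / m : ℕ) : ℚ) * hmn

end Quadruples

theorem twelve_mul_sum_quadruples_mul (n : ℕ) :
    12 * ∑ p ∈ quadruples n, (p.1.1 * p.1.2 : ℚ) =
      5 * sigma 3 n + sigma 1 n - 6 * n * sigma 1 n := by
  have hpolar : 4 * ∑ p ∈ quadruples n, (p.1.1 * p.1.2 : ℚ) =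
      ∑ p ∈ quadruples n, ((p.1.1 : ℚ) + p.1.2) ^ 2 -
        ∑ p ∈ quadruples n, ((p.1.1 : ℚ) - p.1.2) ^ 2 := by
    rw [← sum_sub_distrib, mul_sum]
    exact sum_congr rfl fun p _ => by ring
  linear_combination 3 * hpolar + 3 * sum_quadruples_add_sq n - 3 * sum_quadruples_sub_sq n -
    6 * sum_quadruples_filter_snd_lt_sq_sub n - 6 * sum_quadruples_filter_fst_eq_sq n +
    six_mul_sum_quadruples_filter_snd_eq_sq n + 3 * sum_quadruples_filter_snd_eq_add_sq n

lemma cast_sigma_one_eq_sum_divisorsAntidiagonal (i : ℕ) :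
    (sigma 1 i : ℚ) = ∑ d ∈ i.divisorsAntidiagonal, (d.1 : ℚ) := by
  rw [Nat.sum_divisorsAntidiagonal (fun a _ => (a : ℚ)), cast_sigma]
  simp

lemma sum_antidiagonal_sigma_one_mul_sigma_one (n : ℕ) :
    ∑ ij ∈ antidiagonal n, (sigma 1 ij.1 : ℚ) * sigma 1 ij.2 =
      ∑ p ∈ quadruples n, (p.1.1 * p.1.2 : ℚ) := by
  simp only [cast_sigma_one_eq_sum_divisorsAntidiagonal, sum_mul_sum, ← sum_product']
  rw [sum_sigma']
  refine sum_nbij' (fun t => ((t.2.1.1, t.2.2.1), (t.2.1.2, t.2.2.2)))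
    (fun p => ⟨(p.1.1 * p.2.1, p.1.2 * p.2.2), ((p.1.1, p.2.1), (p.1.2, p.2.2))⟩) ?_ ?_ ?_
    (fun _ _ => rfl) (fun _ _ => rfl)
  · rintro ⟨⟨i, j⟩, ⟨a, x⟩, ⟨b, y⟩⟩
    simp only [mem_sigma, HasAntidiagonal.mem_antidiagonal, mem_product,
      Nat.mem_divisorsAntidiagonal, mem_quadruples]
    rintro ⟨rfl, ⟨rfl, hi⟩, rfl, hj⟩
    simp only [mul_ne_zero_iff] at hi hj
    exact ⟨by omega, by omega, by omega, by omega, rfl⟩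
  · rintro ⟨⟨a, b⟩, x, y⟩
    simp only [mem_sigma, HasAntidiagonal.mem_antidiagonal, mem_product,
      Nat.mem_divisorsAntidiagonal, mem_quadruples]
    rintro ⟨ha, hb, hx, hy, h⟩
    exact ⟨h, ⟨trivial, by positivity⟩, trivial, by positivity⟩
  · rintro ⟨⟨i, j⟩, ⟨a, x⟩, ⟨b, y⟩⟩
    simp only [mem_sigma, HasAntidiagonal.mem_antidiagonal, mem_product,
      Nat.mem_divisorsAntidiagonal]
    rintro ⟨-, ⟨rfl, -⟩, rfl, -⟩
    rfl

-- The constant term is `sigma k 0 = 0`, as `Nat.divisors 0 = ∅`.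
noncomputable def sigmaSeries (k : ℕ) : PowerSeries ℚ :=
  mk fun n => (sigma k n : ℚ)

@[simp]
lemma coeff_sigmaSeries (k n : ℕ) : coeff n (sigmaSeries k) = sigma k n :=
  coeff_mk _ _

lemma mk_ite_eq_one_add_smul_sigmaSeries (c : ℚ) (k : ℕ) :
    mk (fun n => if n = 0 then 1 else c * (sigma k n : ℚ)) = 1 + c • sigmaSeries k := by
  ext n
  rcases eq_or_ne n 0 with rfl | hn
  · simp [sigmaSeries, sigma]
  · simp [sigmaSeries, coeff_one, hn]

/-- `Q - P²` is the power series with constant term 0 and coefficient of `q^d` equal to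
`288 d σ₁(d)` for `d ≥ 1`. -/
theorem Q_sub_P_sq :
    Qseries - Pseries ^ 2 =
      PowerSeries.mk fun d => if d = 0 then 0 else 288 * (d : ℚ) * (sigma 1 d : ℚ) := by
  rw [Qseries, Pseries, mk_ite_eq_one_add_smul_sigmaSeries, mk_ite_eq_one_add_smul_sigmaSeries]
  ext n
  rcases eq_or_ne n 0 with rfl | hn
  · simp [sigmaSeries, sigma]
  · have hsq : coeff n (sigmaSeries 1 ^ 2) = ∑ p ∈ quadruples n, (p.1.1 * p.1.2 : ℚ) := by
      simp only [sq, coeff_mul, coeff_sigmaSeries, sum_antidiagonal_sigma_one_mul_sigma_one]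
    simp only [add_sq, smul_pow, one_pow, mul_one, two_mul, map_sub, map_add, map_smul, hsq,
      coeff_one, coeff_sigmaSeries, coeff_mk, hn, if_false, smul_eq_mul]
    linear_combination -48 * twelve_mul_sum_quadruples_mul n
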